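/- Let M be a rank m matroid on the ground set [n] = {1,...,n} with no loops and no coloops, and let B = {b_1,...,b_m} be a basis of M. The map f_B : ℝ^m → ℝ^n defined by f_B(x)_i = x_j if i = b_j for some j, and f_B(x)_i = min{x_j : b_j ∈ C(i,B) − {i}} if i ∈ [n] − B, is a homeomorphism from ℝ^m onto the local tropical linear space Trop(M)_B (equipped with the subspace topology from ℝ^n). -/

import Mathlib

/-- `C` is a circuit of the matroid `M`: a minimal dependent subset of the ground set. -/
def IsCircuitOf {α : Type*} (M : Matroid α) (C : Set α) : Prop :=
  C ⊆ M.E ∧ ¬ M.Indep C ∧ ∀ D, D ⊂ C → M.Indep D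

/-- The fundamental circuit `C(e,B)` of `e` over `B`: the unique circuit of `M`
contained in `B ∪ {e}` (realized as the intersection of all such circuits). -/
def fundCircuitOf {α : Type*} (M : Matroid α) (e : α) (B : Set α) : Set α :=
  ⋂₀ {C | IsCircuitOf M C ∧ C ⊆ insert e B}

/-- The minimum of `v` over `C` is attained at least twice. -/
def MinAttainedTwice {n : ℕ} (v : Fin n → ℝ) (C : Set (Fin n)) : Prop :=
  ∃ j ∈ C, ∃ k ∈ C, j ≠ k ∧ v j = v k ∧ ∀ i ∈ C, v j ≤ v i

/-- `v` lies in the tropical linear space `Trop(M)`: for every circuit `C` of `M`,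
the minimum of `v` over `C` is attained at least twice. -/
def InTrop {n : ℕ} (M : Matroid (Fin n)) (v : Fin n → ℝ) : Prop :=
  ∀ C, IsCircuitOf M C → MinAttainedTwice v C

/-- The `v`-weight of a set `B`, i.e. `∑ i ∈ B, v i`. -/
noncomputable def weightOf {n : ℕ} (v : Fin n → ℝ) (B : Set (Fin n)) : ℝ :=
  ∑ i, B.indicator v i

/-!
A vector `v` lies in `Trop(M)_B` iff `v i = min {v e : e ∈ C(i,B) - {i}}` for every `i ∉ B`.
Indeed, maximality of `B` amounts to the local inequalities `v i ≤ v e` for `e ∈ C(i,B)`, and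
then the minimum of `v` on a circuit, if attained at some `f ∈ B`, is attained again at an
element `k ∉ B` with `f ∈ C(k,B)`; a minimum attained only outside `B` is first exchanged into
`B` without changing the weight. Hence `f_B` and `v ↦ (v (b j))_j` are mutually inverse, and
both are continuous since `f_B` is built from coordinate projections and finite minima.
-/

open Set

section

variable {α : Type*} {M : Matroid α} {B B' C I : Set α} {e i : α}

lemma isCircuitOf_iff : IsCircuitOf M C ↔ M.IsCircuit C := by
  rw [Matroid.isCircuit_iff_forall_ssubset, Matroid.dep_iff, IsCircuitOf]
  tauto

namespace Matroid

lemma Indep.fundCircuitOf_eq (hI : M.Indep I) (hecl : e ∈ M.closure I) (heI : e ∉ I) :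
    fundCircuitOf M e I = M.fundCircuit e I := by
  have h : {C | IsCircuitOf M C ∧ C ⊆ insert e I} = {M.fundCircuit e I} := by
    ext C
    simp only [isCircuitOf_iff, mem_ofPred_eq, mem_singleton_iff]
    refine ⟨fun h ↦ h.1.eq_fundCircuit_of_subset hI h.2, ?_⟩
    rintro rfl
    exact ⟨hI.fundCircuit_isCircuit hecl heI, M.fundCircuit_subset_insert e I⟩
  rw [fundCircuitOf, h, sInter_singleton]

lemma fundCircuit_sdiff_singleton_subset (M : Matroid α) (heI : e ∉ I) :
    M.fundCircuit e I \ {e} ⊆ I :=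
  M.fundCircuit_sdiff_eq_inter heI ▸ inter_subset_right

lemma IsBase.fundCircuit_sdiff_singleton_nonempty (hB : M.IsBase B) (hiE : i ∈ M.E)
    (hiB : i ∉ B) (hi : M.Indep {i}) : (M.fundCircuit i B \ {i}).Nonempty := by
  rw [nonempty_iff_ne_empty, Ne, sdiff_eq_empty]
  exact fun h ↦ (hB.fundCircuit_isCircuit hiE hiB).not_indep (hi.subset h)

lemma IsBase.image_fundCircuitOf_sdiff_singleton {ι L : Type*} {b : ι → α} {x : ι → L}
    {v : α → L} (hB : M.IsBase B) (hiE : i ∈ M.E) (hiB : i ∉ B) (hBb : B ⊆ range b)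
    (hv : ∀ j, v (b j) = x j) :
    x '' {j | b j ∈ fundCircuitOf M i B \ {i}} = v '' (M.fundCircuit i B \ {i}) := by
  rw [hB.indep.fundCircuitOf_eq (by rwa [hB.closure_eq]) hiB,
    show x = v ∘ b from funext fun j ↦ (hv j).symm]
  exact (image_comp v b _).trans <| congrArg _ <|
    image_preimage_eq_of_subset ((M.fundCircuit_sdiff_singleton_subset hiB).trans hBb)

/-- The fundamental cocircuit of `e` meets `C` in a second element `k`, and `k ∉ B`. -/
lemma IsCircuit.exists_mem_fundCircuit_of_mem_isBase (hC : M.IsCircuit C) (hB : M.IsBase B)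
    (heC : e ∈ C) (heB : e ∈ B) : ∃ k ∈ C \ B, e ∈ M.fundCircuit k B := by
  obtain ⟨k, ⟨hkC, hkK⟩, hke⟩ : ∃ k ∈ C ∩ M.fundCocircuit e B, k ≠ e := by
    by_contra! h
    exact hC.inter_isCocircuit_ne_singleton (fundCocircuit_isCocircuit heB hB)
      (eq_singleton_iff_unique_mem.2 ⟨⟨heC, M.mem_fundCocircuit e B⟩, h⟩)
  have hkB : k ∉ B := fun hkB ↦ hke (M.fundCocircuit_inter_eq heB ▸ ⟨hkK, hkB⟩ : k ∈ ({e} : Set α))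
  exact ⟨k, ⟨hkC, hkB⟩, hB.mem_fundCocircuit_iff_mem_fundCircuit.1 hkK⟩

lemma IsBase.exchange_isBase_of_mem_fundCircuit (hB : M.IsBase B) (hiE : i ∈ M.E) (hiB : i ∉ B)
    (he : e ∈ M.fundCircuit i B \ {i}) : M.IsBase (insert i B \ {e}) :=
  hB.exchange_isBase_of_indep' (M.fundCircuit_sdiff_singleton_subset hiB he) hiB
    ((hB.indep.mem_fundCircuit_iff (by rwa [hB.closure_eq]) hiB).1 he.1)

lemma IsBase.exists_exchange_mem_fundCircuit (hB : M.IsBase B) (hB' : M.IsBase B')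
    (hi : i ∈ B' \ B) :
    ∃ e ∈ M.fundCircuit i B \ {i}, e ∉ B' ∧ M.IsBase (insert e B' \ {i}) := by
  have hC := hB.fundCircuit_isCircuit (hB'.subset_ground hi.1) hi.2
  obtain ⟨k, ⟨hkC, hkB'⟩, hik⟩ :=
    hC.exists_mem_fundCircuit_of_mem_isBase hB' (M.mem_fundCircuit i B) hi.1
  have hki : k ≠ i := fun h ↦ hkB' (h ▸ hi.1)
  exact ⟨k, ⟨hkC, hki⟩, hkB',
    hB'.exchange_isBase_of_mem_fundCircuit (hC.subset_ground hkC) hkB' ⟨hik, hki.symm⟩⟩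

end Matroid

end

lemma Set.Finite.isLeast_iff_eq_csInf {L : Type*} [ConditionallyCompleteLinearOrder L]
    {s : Set L} {a : L} (hs : s.Finite) (hne : s.Nonempty) : IsLeast s a ↔ a = sInf s :=
  ⟨fun h ↦ h.csInf_eq.symm, fun h ↦ h ▸ ⟨hne.csInf_mem hs, fun _ hy ↦ csInf_le hs.bddBelow hy⟩⟩

lemma continuous_sInf_image {ι L : Type*} [ConditionallyCompleteLinearOrder L] [TopologicalSpace L]
    [OrderClosedTopology L] {S : Set ι} (hS : S.Finite) :
    Continuous fun x : ι → L ↦ sInf (x '' S) := by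
  obtain rfl | hne := S.eq_empty_or_nonempty
  · simpa only [image_empty] using continuous_const
  have h : (fun x : ι → L ↦ sInf (x '' S)) = fun x ↦ hS.toFinset.inf' (by simpa) fun i ↦ x i := by
    funext x
    rw [Finset.inf'_eq_csInf_image, hS.coe_toFinset]
  rw [h]
  exact Continuous.finset_inf'_apply _ fun i _ ↦ continuous_apply i

lemma weightOf_insert_sdiff {n : ℕ} (v : Fin n → ℝ) {S : Set (Fin n)} {i e : Fin n}
    (hi : i ∉ S) (he : e ∈ S) :
    weightOf v (insert i S \ {e}) = weightOf v S + v i - v e := by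
  have h : ∀ x, (insert i S \ {e}).indicator v x + (Pi.single e (v e) : Fin n → ℝ) x
      = S.indicator v x + (Pi.single i (v i) : Fin n → ℝ) x := by
    intro x
    by_cases hxi : x = i <;> by_cases hxe : x = e <;> by_cases hxS : x ∈ S <;>
      simp_all [indicator]
  have hsum := Finset.sum_congr rfl fun x (_ : x ∈ Finset.univ) ↦ h x
  simp only [Finset.sum_add_distrib, Finset.sum_pi_single', Finset.mem_univ, if_true] at hsum
  rw [weightOf, weightOf]
  linarith

section

variable {n : ℕ} {M : Matroid (Fin n)} {v : Fin n → ℝ} {B C : Set (Fin n)}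

def HasMaxWeight (M : Matroid (Fin n)) (v : Fin n → ℝ) (B : Set (Fin n)) : Prop :=
  ∀ B', M.IsBase B' → weightOf v B' ≤ weightOf v B

lemma HasMaxWeight.le_of_mem_fundCircuit (hmax : HasMaxWeight M v B) (hB : M.IsBase B)
    {i e : Fin n} (hi : i ∈ M.E \ B) (he : e ∈ M.fundCircuit i B) : v i ≤ v e := by
  obtain rfl | hei := eq_or_ne e i
  · rfl
  have hexch := hmax _ (hB.exchange_isBase_of_mem_fundCircuit hi.1 hi.2 ⟨he, hei⟩)
  rw [weightOf_insert_sdiff v hi.2 (M.fundCircuit_sdiff_singleton_subset hi.2 ⟨he, hei⟩)]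
    at hexch
  linarith

/-- Exchanging some `i ∈ B' \ B` for a suitable element of `C(i,B)` does not decrease the
weight of `B'` and brings it closer to `B`. -/
lemma Matroid.IsBase.hasMaxWeight_of_forall_fundCircuit (hB : M.IsBase B)
    (hloc : ∀ i ∈ M.E \ B, ∀ e ∈ M.fundCircuit i B, v i ≤ v e) : HasMaxWeight M v B := by
  intro B' hB'
  induction hk : (B' \ B).ncard using Nat.strong_induction_on generalizing B' with
  | _ k ih =>
  obtain h | ⟨i, hi⟩ := (B' \ B).eq_empty_or_nonempty
  · rw [hB'.eq_of_subset_isBase hB (sdiff_eq_empty.1 h)]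
  obtain ⟨e, he, heB', hexch⟩ := hB.exists_exchange_mem_fundCircuit hB' hi
  have heB : e ∈ B := M.fundCircuit_sdiff_singleton_subset hi.2 he
  have hcloser : (insert e B' \ {i}) \ B ⊂ B' \ B := by
    refine ssubset_of_subset_not_subset (fun x hx ↦ ?_) fun h ↦ (h hi).1.2 rfl
    grind
  have hle := ih _ (hk ▸ ncard_lt_ncard hcloser) _ hexch rfl
  rw [weightOf_insert_sdiff v heB' hi.1] at hle
  linarith [hloc i ⟨hB'.subset_ground hi.1, hi.2⟩ e he.1]

lemma minAttainedTwice_of_hasMaxWeight (hB : M.IsBase B) (hmax : HasMaxWeight M v B)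
    (hC : M.IsCircuit C) {f : Fin n} (hfC : f ∈ C) (hfB : f ∈ B) (hmin : ∀ x ∈ C, v f ≤ v x) :
    MinAttainedTwice v C := by
  obtain ⟨k, ⟨hkC, hkB⟩, hfk⟩ := hC.exists_mem_fundCircuit_of_mem_isBase hB hfC hfB
  have hkf : k ≠ f := fun h ↦ hkB (h ▸ hfB)
  exact ⟨f, hfC, k, hkC, hkf.symm,
    le_antisymm (hmin k hkC) (hmax.le_of_mem_fundCircuit hB ⟨hC.subset_ground hkC, hkB⟩ hfk),
    hmin⟩

theorem inTrop_and_hasMaxWeight_iff (hB : M.IsBase B) :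
    InTrop M v ∧ HasMaxWeight M v B ↔
      ∀ i ∈ M.E \ B, IsLeast (v '' (M.fundCircuit i B \ {i})) (v i) := by
  constructor
  · rintro ⟨htrop, hmax⟩ i hi
    have hlow : ∀ e ∈ M.fundCircuit i B, v i ≤ v e := fun e ↦ hmax.le_of_mem_fundCircuit hB hi
    refine ⟨?_, by rintro _ ⟨e, he, rfl⟩; exact hlow e he.1⟩
    obtain ⟨j, hj, k, hk, hjk, hvjk, hmin⟩ :=
      htrop _ (isCircuitOf_iff.2 (hB.fundCircuit_isCircuit hi.1 hi.2))
    have hattained : ∀ e ∈ M.fundCircuit i B, e ≠ i → v e = v j →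
        v i ∈ v '' (M.fundCircuit i B \ {i}) := fun e he hei hej ↦
      ⟨e, ⟨he, hei⟩, le_antisymm (hej ▸ hmin i (M.mem_fundCircuit i B)) (hlow e he)⟩
    obtain rfl | hji := eq_or_ne j i
    · exact hattained k hk hjk.symm hvjk.symm
    · exact hattained j hj hji rfl
  · intro hleast
    have hmax : HasMaxWeight M v B := hB.hasMaxWeight_of_forall_fundCircuit fun i hi e he ↦ by
      obtain rfl | hei := eq_or_ne e i
      · rfl
      · exact (hleast i hi).2 ⟨e, ⟨he, hei⟩, rfl⟩
    refine ⟨fun C hC ↦ ?_, hmax⟩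
    rw [isCircuitOf_iff] at hC
    obtain ⟨f, hfC, hmin⟩ := C.exists_min_image v C.toFinite hC.nonempty
    by_cases hfB : f ∈ B
    · exact minAttainedTwice_of_hasMaxWeight hB hmax hC hfC hfB hmin
    obtain ⟨e, he, hve⟩ := (hleast f ⟨hC.subset_ground hfC, hfB⟩).1
    have hmax₁ : HasMaxWeight M v (insert f B \ {e}) := fun B' hB' ↦ by
      rw [weightOf_insert_sdiff v hfB (M.fundCircuit_sdiff_singleton_subset hfB he)]
      linarith [hmax B' hB']
    exact minAttainedTwice_of_hasMaxWeight
      (hB.exchange_isBase_of_mem_fundCircuit (hC.subset_ground hfC) hfB he) hmax₁ hC hfC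
      ⟨mem_insert f B, fun h ↦ he.2 h.symm⟩ hmin

theorem inTrop_and_hasMaxWeight_iff_eq_sInf (hB : M.IsBase B)
    (hne : ∀ i ∈ M.E \ B, (M.fundCircuit i B \ {i}).Nonempty) :
    InTrop M v ∧ HasMaxWeight M v B ↔
      ∀ i ∈ M.E \ B, v i = sInf (v '' (M.fundCircuit i B \ {i})) := by
  rw [inTrop_and_hasMaxWeight_iff hB]
  exact forall₂_congr fun i hi ↦ (toFinite _).isLeast_iff_eq_csInf ((hne i hi).image v)

end

theorem statement3_general {n m : ℕ} (M : Matroid (Fin n))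
    (hloops : ∀ e, M.Indep {e})
    (B : Set (Fin n)) (hB : M.IsBase B)
    (b : Fin m → Fin n) (hbB : Set.range b = B)
    (fB : (Fin m → ℝ) → (Fin n → ℝ))
    (hfB : ∀ x j, fB x (b j) = x j)
    (hfB' : ∀ x, ∀ i ∉ B, fB x i = sInf (x '' {j | b j ∈ fundCircuitOf M i B \ {i}})) :
    ∃ F : (Fin m → ℝ) ≃ₜ
        {v : Fin n → ℝ // InTrop M v ∧ ∀ B', M.IsBase B' → weightOf v B' ≤ weightOf v B},
      ∀ x, (F x : Fin n → ℝ) = fB x := by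
  have hE (i : Fin n) : i ∈ M.E := (hloops i).subset_ground rfl
  have hchar (v : Fin n → ℝ) := inTrop_and_hasMaxWeight_iff_eq_sInf hB (v := v)
    fun i hi ↦ hB.fundCircuit_sdiff_singleton_nonempty hi.1 hi.2 (hloops i)
  have hfB_eq (x : Fin m → ℝ) (v : Fin n → ℝ) (hv : ∀ j, v (b j) = x j) (i : Fin n) (hi : i ∉ B) :
      fB x i = sInf (v '' (M.fundCircuit i B \ {i})) := by
    rw [hfB' x i hi, hB.image_fundCircuitOf_sdiff_singleton (hE i) hi hbB.ge hv]
  have hinv (v : Fin n → ℝ) (hv : InTrop M v ∧ HasMaxWeight M v B) : fB (v ∘ b) = v := by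
    funext i
    by_cases hi : i ∈ B
    · obtain ⟨j, rfl⟩ := hbB ▸ hi
      exact hfB _ j
    · exact (hfB_eq _ v (fun _ ↦ rfl) i hi).trans ((hchar v).1 hv i ⟨hE i, hi⟩).symm
  have hcont : Continuous fB := continuous_pi fun i ↦ by
    by_cases hi : i ∈ B
    · obtain ⟨j, rfl⟩ := hbB ▸ hi
      simpa only [hfB] using continuous_apply j
    · simpa only [hfB' _ i hi] using continuous_sInf_image (toFinite _)
  exact ⟨{ toFun x := ⟨fB x, (hchar _).2 fun i hi ↦ hfB_eq x _ (hfB x) i hi.2⟩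
           invFun v := v.1 ∘ b
           left_inv x := funext (hfB x)
           right_inv v := Subtype.ext (hinv v.1 v.2)
           continuous_toFun := hcont.subtype_mk _
           continuous_invFun :=
             continuous_pi fun j ↦ (continuous_apply (b j)).comp continuous_subtype_val },
    fun _ ↦ rfl⟩

/-- For a rank `m` matroid `M` on `[n]` with no loops and no coloops and a
basis `B = {b 0, ..., b (m-1)}`, the map `f_B : ℝ^m → ℝ^n` given by `f_B(x)_{b j} = x j`
and `f_B(x)_i = min { x j : b j ∈ C(i,B) - {i} }` for `i ∉ B` is a homeomorphism from
`ℝ^m` onto the local tropical linear space `Trop(M)_B` (with its subspace topology). -/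
theorem statement3 {n m : ℕ} (M : Matroid (Fin n)) (hE : M.E = Set.univ)
    (hloops : ∀ e, M.Indep {e})
    (hcoloops : ∀ e, ∃ B, M.IsBase B ∧ e ∉ B)
    (B : Set (Fin n)) (hB : M.IsBase B)
    (b : Fin m → Fin n) (hb : Function.Injective b) (hbB : Set.range b = B)
    (fB : (Fin m → ℝ) → (Fin n → ℝ))
    (hfB : ∀ x j, fB x (b j) = x j)
    (hfB' : ∀ x, ∀ i ∉ B, fB x i = sInf (x '' {j | b j ∈ fundCircuitOf M i B \ {i}})) :
    ∃ F : (Fin m → ℝ) ≃ₜ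
        {v : Fin n → ℝ // InTrop M v ∧ ∀ B', M.IsBase B' → weightOf v B' ≤ weightOf v B},
      ∀ x, (F x : Fin n → ℝ) = fB x :=
  statement3_general M hloops B hB b hbB fB hfB hfB'
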